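/- arXiv:1703.07612 — 2 statements merged into one kernel-verified Lean document; each statement's English description precedes it below -/
import Mathlib

section
/- Let Δ > 0 and consider the DoS signal with pulses (h_n, τ_n) = (nΔ, 0) for all n ∈ ℕ. This signal satisfies the DoS frequency assumption n(τ,t) ≤ η + (t−τ)/τ_D with η = 1 and τ_D = Δ, and the DoS duration assumption |Ξ(τ,t)| ≤ κ + (t−τ)/T with κ = 0 and T = ∞ (i.e., |Ξ(τ,t)| = 0), it achieves 1/T + Δ/τ_D = 1, and it disrupts every periodic transmission attempt at times t_k = kΔ. -/
open MeasureTheory Set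

/-! Dividing by `Δ`, the pulses in `[τ, t)` are the natural numbers in `[τ/Δ, t/Δ)`, and there
are at most `⌈t/Δ⌉₊ - ⌈τ/Δ⌉₊ ≤ ⌈(t - τ)/Δ⌉₊ < (t - τ)/Δ + 1` of them. The pulses form a countable
set, hence a Lebesgue null set, so the attack has zero total duration. -/

section Counting

variable {K : Type*} [Field K] [LinearOrder K] [IsStrictOrderedRing K] [FloorSemiring K]

theorem Nat.cast_ceil_sub_ceil_lt {a b : K} (hab : a ≤ b) :
    ((⌈b⌉₊ - ⌈a⌉₊ : ℕ) : K) < b - a + 1 := by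
  have hceil : ⌈b⌉₊ - ⌈a⌉₊ ≤ ⌈b - a⌉₊ := by
    have := Nat.ceil_add_le (b - a) a
    rw [sub_add_cancel] at this
    omega
  calc ((⌈b⌉₊ - ⌈a⌉₊ : ℕ) : K) ≤ ⌈b - a⌉₊ := by exact_mod_cast hceil
    _ < b - a + 1 := Nat.ceil_lt_add_one (sub_nonneg.2 hab)

theorem Nat.card_setOf_cast_mem_Ico_le {a b : K} (hab : a ≤ b) :
    (Nat.card {n : ℕ | (n : K) ∈ Ico a b} : K) ≤ b - a + 1 := by
  have hsub : {n : ℕ | (n : K) ∈ Ico a b} ⊆ ↑(Finset.Ico ⌈a⌉₊ ⌈b⌉₊) := by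
    rintro n ⟨han, hnb⟩
    simp only [Finset.coe_Ico, mem_Ico]
    exact ⟨Nat.ceil_le.2 han, by exact_mod_cast hnb.trans_le (Nat.le_ceil b)⟩
  have hcard := Nat.card_mono (Finset.Ico ⌈a⌉₊ ⌈b⌉₊).finite_toSet hsub
  simp only [Nat.card_coe_set_eq, ncard_coe_finset, Nat.card_Ico] at hcard
  calc (Nat.card {n : ℕ | (n : K) ∈ Ico a b} : K) ≤ ((⌈b⌉₊ - ⌈a⌉₊ : ℕ) : K) := by
        exact_mod_cast hcard
    _ ≤ b - a + 1 := (Nat.cast_ceil_sub_ceil_lt hab).le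

theorem Nat.card_setOf_cast_mul_mem_Ico_le {Δ τ t : K} (hΔ : 0 < Δ) (hτt : τ ≤ t) :
    (Nat.card {n : ℕ | (n : K) * Δ ∈ Ico τ t} : K) ≤ 1 + (t - τ) / Δ := by
  have hset : {n : ℕ | (n : K) * Δ ∈ Ico τ t} = {n : ℕ | (n : K) ∈ Ico (τ / Δ) (t / Δ)} := by
    ext n
    simp only [mem_ofPred_eq, mem_Ico, div_le_iff₀ hΔ, lt_div_iff₀ hΔ]
  rw [hset, add_comm, sub_div]
  exact Nat.card_setOf_cast_mem_Ico_le (div_le_div_of_nonneg_right hτt hΔ.le)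

end Counting

/-- The DoS signal of pulses `(h_n, τ_n) = (nΔ, 0)`, i.e. the DoS
sets are the singletons `{nΔ}`, satisfies the DoS frequency assumption with
`η = 1`, `τ_D = Δ`, the duration assumption with `κ = 0`, `T = ∞`
(its total duration is zero), it achieves `1/T + Δ/τ_D = 1` (with `1/∞ = 0`),
and it disrupts every periodic transmission attempt at `t_k = kΔ`. -/
theorem stmt1 (Δ : ℝ) (hΔ : 0 < Δ)
    (H : ℕ → Set ℝ) (hH : ∀ n : ℕ, H n = {(n : ℝ) * Δ}) :
    -- frequency assumption with η = 1, τ_D = Δ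
    (∀ τ t : ℝ, 0 ≤ τ → τ ≤ t →
      (Nat.card {n : ℕ | (n : ℝ) * Δ ∈ Set.Ico τ t} : ℝ) ≤ 1 + (t - τ) / Δ) ∧
    -- duration assumption with κ = 0, T = ∞ : |Ξ(τ,t)| = 0
    (∀ τ t : ℝ, 0 ≤ τ → τ ≤ t →
      (volume ((⋃ n, H n) ∩ Set.Icc τ t)).toReal = 0) ∧
    -- 1/T + Δ/τ_D = 1 with 1/T = 0 and τ_D = Δ
    (0 + Δ / Δ = 1) ∧
    -- every transmission attempt t_k = kΔ is disrupted
    (∀ k : ℕ, (k : ℝ) * Δ ∈ ⋃ n, H n) := by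
  have hpulses : ⋃ n, H n = range fun n : ℕ => (n : ℝ) * Δ := by
    simp only [hH, iUnion_singleton_eq_range]
  have hnull : volume (⋃ n, H n) = 0 := by
    rw [hpulses]
    exact (countable_range _).measure_zero volume
  refine ⟨fun τ t _ hτt => Nat.card_setOf_cast_mul_mem_Ico_le hΔ hτt, fun τ t _ _ => ?_,
    by rw [zero_add, div_self hΔ.ne'], fun k => hpulses ▸ mem_range_self k⟩
  rw [measure_mono_null inter_subset_left hnull, ENNReal.toReal_zero]
end

section
/- Let V : ℝ_{≥0} → ℝ_{≥0}, and suppose there exist ω_1, ω_2 > 0, times z_m < z_m + s ≤ z_{m+1} (where s = hδ), and nonnegative constants ζ_1, ζ_2, W such that V(t) ≤ e^{−ω_1(t−z_m)}V(z_m) + ζ_1 W for all t ∈ [z_m, z_m + s], and V(t) ≤ e^{ω_2(t − z_m − s)}V(z_m + s) + ζ_2 e^{ω_2(t − z_m − s)} W for all t ∈ [z_m + s, z_{m+1}]. If z_{m+1} − z_m ≤ Q + Δ and β := (ω_1 s − ω_2(Q + Δ − s))/(Q + Δ) > 0, then V(z_{m+1}) ≤ e^{−β(z_{m+1} − z_m)}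 V(z_m) + 2·max{ζ_1, ζ_2}·e^{ω_2(Q + Δ − s)}·W. -/
open Real

/-- One-step contraction of the Lyapunov function over an
inter-success interval `[z_m, z_{m+1}]` consisting of a decaying part
`[z_m, z_m + s]` and a growing part `[z_m + s, z_{m+1}]`. -/
theorem stmt4
    (V : ℝ → ℝ) (hVnonneg : ∀ t, 0 ≤ V t)
    (ω₁ ω₂ zm zm1 s ζ₁ ζ₂ W Q Δ β : ℝ)
    (hω₁ : 0 < ω₁) (hω₂ : 0 < ω₂)
    (hs : 0 < s) (hseg : zm < zm + s) (hseg' : zm + s ≤ zm1)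
    (hζ₁ : 0 ≤ ζ₁) (hζ₂ : 0 ≤ ζ₂) (hW : 0 ≤ W)
    (hdecay : ∀ t ∈ Set.Icc zm (zm + s),
      V t ≤ Real.exp (-ω₁ * (t - zm)) * V zm + ζ₁ * W)
    (hgrow : ∀ t ∈ Set.Icc (zm + s) zm1,
      V t ≤ Real.exp (ω₂ * (t - zm - s)) * V (zm + s)
        + ζ₂ * Real.exp (ω₂ * (t - zm - s)) * W)
    (hlen : zm1 - zm ≤ Q + Δ)
    (hβ : β = (ω₁ * s - ω₂ * (Q + Δ - s)) / (Q + Δ)) (hβpos : 0 < β) :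
    V zm1 ≤ Real.exp (-β * (zm1 - zm)) * V zm
      + 2 * max ζ₁ ζ₂ * Real.exp (ω₂ * (Q + Δ - s)) * W := by
  have hQΔ : 0 < Q + Δ := lt_of_lt_of_le (by linarith) hlen
  have hβQ : β * (Q + Δ) = ω₁ * s - ω₂ * (Q + Δ - s) := by
    rw [hβ]; field_simp
  have h1 := hgrow zm1 ⟨hseg', le_refl _⟩
  have h2 := hdecay (zm + s) ⟨le_of_lt hseg, le_refl _⟩
  have hss : zm + s - zm = s := by ring
  rw [hss] at h2
  set E := Real.exp (ω₂ * (zm1 - zm - s)) with hE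
  have hEpos : 0 < E := Real.exp_pos _
  have step : V zm1 ≤ E * Real.exp (-ω₁ * s) * V zm + (ζ₁ + ζ₂) * E * W := by
    have := mul_le_mul_of_nonneg_left h2 hEpos.le
    nlinarith [hVnonneg zm1, hVnonneg (zm + s)]
  have key1 : E * Real.exp (-ω₁ * s) ≤ Real.exp (-β * (zm1 - zm)) := by
    rw [hE, ← Real.exp_add]
    apply Real.exp_le_exp.mpr
    nlinarith [mul_le_mul_of_nonneg_left hlen hβpos.le,
      mul_le_mul_of_nonneg_left (show zm1 - zm - s ≤ Q + Δ - s by linarith) hω₂.le]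
  have key2 : E ≤ Real.exp (ω₂ * (Q + Δ - s)) := by
    apply Real.exp_le_exp.mpr
    nlinarith
  have key3 : ζ₁ + ζ₂ ≤ 2 * max ζ₁ ζ₂ := by
    have := le_max_left ζ₁ ζ₂
    have := le_max_right ζ₁ ζ₂
    linarith
  have hmax : 0 ≤ max ζ₁ ζ₂ := le_trans hζ₁ (le_max_left _ _)
  calc V zm1 ≤ E * Real.exp (-ω₁ * s) * V zm + (ζ₁ + ζ₂) * E * W := step
    _ ≤ Real.exp (-β * (zm1 - zm)) * V zm
        + 2 * max ζ₁ ζ₂ * Real.exp (ω₂ * (Q + Δ - s)) * W := by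
      have t1 : E * Real.exp (-ω₁ * s) * V zm ≤ Real.exp (-β * (zm1 - zm)) * V zm :=
        mul_le_mul_of_nonneg_right key1 (hVnonneg zm)
      have t2 : (ζ₁ + ζ₂) * E * W ≤ 2 * max ζ₁ ζ₂ * Real.exp (ω₂ * (Q + Δ - s)) * W := by
        apply mul_le_mul_of_nonneg_right _ hW
        have := mul_le_mul key3 key2 hEpos.le (by linarith)
        linarith
      linarith
end
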